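/- arXiv:2109.03583 — 7 statements merged into one kernel-verified Lean document; each statement's English description precedes it below -/
import Mathlib

section
/- Let α, β be nonzero complex numbers. With B_i(α) the Burau matrix (identity except block [[1-α,α],[1,0]] in rows/columns i,i+1) and T_i(β) as above (identity except block [[0,β^{-1}],[β,0]]), the mixed virtual braid relation B_i(α)·T_{i+1}(β)·T_i(β) = T_{i+1}(β)·T_i(β)·B_{i+1}(α) holds for all 1 ≤ i ≤ n-2. -/
/-! `P = T_{i+1}(β) T_i(β)` sends `e_{i+1} ↦ β⁻¹ e_i`, `e_{i+2} ↦ β⁻¹ e_{i+1}`, `e_i ↦ β² e_{i+2}`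
and fixes every other basis vector. So `P` carries rows/columns `i+1, i+2` to `i, i+1` up to the
scalar `β⁻¹`, which cancels on the two sides: `X_i P = P X_{i+1}` for *any* `2 × 2` block `X`
placed at `i` resp. `i+1`, in particular for the Burau block. -/

noncomputable def burauB (n : ℕ) (α : ℂ) (i : ℕ) : Matrix (Fin n) (Fin n) ℂ :=
  Matrix.of fun k l =>
    if k.val = i ∧ l.val = i then 1 - α
    else if k.val = i ∧ l.val = i + 1 then α
    else if k.val = i + 1 ∧ l.val = i then 1
    else if k.val = i + 1 ∧ l.val = i + 1 then 0
    else if k = l then 1 else 0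

noncomputable def permT (n : ℕ) (β : ℂ) (i : ℕ) : Matrix (Fin n) (Fin n) ℂ :=
  Matrix.of fun k l =>
    if k.val = i ∧ l.val = i then 0
    else if k.val = i ∧ l.val = i + 1 then β⁻¹
    else if k.val = i + 1 ∧ l.val = i then β
    else if k.val = i + 1 ∧ l.val = i + 1 then 0
    else if k = l then 1 else 0

open Matrix

def blockAt {R : Type*} [Ring R] (n i : ℕ) (a b c d : R) : Matrix (Fin n) (Fin n) R :=
  of fun k l =>
    if k.val = i ∧ l.val = i then a
    else if k.val = i ∧ l.val = i + 1 then b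
    else if k.val = i + 1 ∧ l.val = i then c
    else if k.val = i + 1 ∧ l.val = i + 1 then d
    else if k = l then 1 else 0

theorem burauB_eq_blockAt (n : ℕ) (α : ℂ) (i : ℕ) : burauB n α i = blockAt n i (1 - α) α 1 0 :=
  rfl

theorem permT_eq_blockAt (n : ℕ) (β : ℂ) (i : ℕ) : permT n β i = blockAt n i 0 β⁻¹ β 0 :=
  rfl

theorem blockAt_eq_one_add {R : Type*} [Ring R] {n i : ℕ} (h : i + 1 < n) (a b c d : R) :
    blockAt n i a b c d =
      1 + (a - 1) • single ⟨i, by omega⟩ ⟨i, by omega⟩ 1 + b • single ⟨i, by omega⟩ ⟨i + 1, h⟩ 1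
        + c • single ⟨i + 1, h⟩ ⟨i, by omega⟩ 1 + (d - 1) • single ⟨i + 1, h⟩ ⟨i + 1, h⟩ 1 := by
  ext k l
  simp only [blockAt, of_apply, Matrix.add_apply, Matrix.smul_apply, one_apply, single_apply,
    Fin.ext_iff]
  split_ifs <;> first | omega | simp

theorem blockAt_mul_permT_mul_permT {n i : ℕ} (h : i + 2 < n) (β a b c d : ℂ) :
    blockAt n i a b c d * permT n β (i + 1) * permT n β i =
      permT n β (i + 1) * permT n β i * blockAt n (i + 1) a b c d := by
  simp only [permT_eq_blockAt]
  rw [blockAt_eq_one_add (by omega : i + 1 < n), blockAt_eq_one_add (by omega : i + 1 + 1 < n),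
    blockAt_eq_one_add (by omega : i + 1 < n), blockAt_eq_one_add (by omega : i + 1 + 1 < n)]
  set p : Fin n := ⟨i, by omega⟩
  set q : Fin n := ⟨i + 1, by omega⟩
  set r : Fin n := ⟨i + 1 + 1, by omega⟩
  have hpq : p ≠ q := by simp [p, q, Fin.ext_iff]
  have hpr : p ≠ r := by simp [p, r, Fin.ext_iff]; omega
  have hqr : q ≠ r := by simp [q, r, Fin.ext_iff]
  simp only [Matrix.add_mul, Matrix.mul_add, Matrix.one_mul, smul_mul_assoc, Matrix.mul_smul,
    single_mul_single_same, mul_one, smul_zero, single_mul_single_of_ne, hpq, hpr, hqr, hpq.symm,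
    hpr.symm, hqr.symm, ne_eq, not_false_eq_true, add_zero]
  module

theorem mixed_virtual_relation_general (n : ℕ) (α β : ℂ)
    (i : ℕ) (h : i + 2 < n) :
    burauB n α i * permT n β (i + 1) * permT n β i =
      permT n β (i + 1) * permT n β i * burauB n α (i + 1) := by
  rw [burauB_eq_blockAt, burauB_eq_blockAt]
  exact blockAt_mul_permT_mul_permT h β (1 - α) α 1 0

/-- Mixed virtual braid relation (V7). -/
theorem mixed_virtual_relation (n : ℕ) (α β : ℂ) (hα : α ≠ 0) (hβ : β ≠ 0)
    (i : ℕ) (h : i + 2 < n) :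
    burauB n α i * permT n β (i + 1) * permT n β i =
      permT n β (i + 1) * permT n β i * burauB n α (i + 1) :=
  mixed_virtual_relation_general n α β i h
end

section
/- Let α, β ∈ ℂ* with α ≠ β and β ≠ 1, and n ≥ 3. The assignment σ_i ↦ B_i(α), τ_i ↦ T_i(β) defines a group homomorphism from the virtual braid group VB_n to GL(n, ℂ), i.e., the matrices B_i(α) and T_i(β) satisfy all defining relations (V1)–(V7) of VB_n. -/
/-- Generators of the virtual braid group `VB_n`: `Sum.inl i = σ_{i+1}`,
`Sum.inr i = τ_{i+1}` for `i : Fin (n-1)` (0-indexed). -/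
abbrev VBGen (n : ℕ) := Fin (n - 1) ⊕ Fin (n - 1)

/-- `σ_i` as a free group element. -/
def vσ {n : ℕ} (i : Fin (n - 1)) : FreeGroup (VBGen n) := FreeGroup.of (Sum.inl i)

/-- `τ_i` as a free group element. -/
def vτ {n : ℕ} (i : Fin (n - 1)) : FreeGroup (VBGen n) := FreeGroup.of (Sum.inr i)

/-- The defining relations (V1)–(V7) of the virtual braid group `VB_n`,
as relator words in the free group. -/
def VBRels (n : ℕ) : Set (FreeGroup (VBGen n)) :=
  { r | (∃ (i j : Fin (n - 1)), j.val = i.val + 1 ∧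
          r = vσ i * vσ j * vσ i * (vσ j * vσ i * vσ j)⁻¹) ∨
        (∃ (i j : Fin (n - 1)), (i.val + 2 ≤ j.val ∨ j.val + 2 ≤ i.val) ∧
          r = vσ i * vσ j * (vσ j * vσ i)⁻¹) ∨
        (∃ (i : Fin (n - 1)), r = vτ i * vτ i) ∨
        (∃ (i j : Fin (n - 1)), j.val = i.val + 1 ∧
          r = vτ i * vτ j * vτ i * (vτ j * vτ i * vτ j)⁻¹) ∨
        (∃ (i j : Fin (n - 1)), (i.val + 2 ≤ j.val ∨ j.val + 2 ≤ i.val) ∧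
          r = vτ i * vτ j * (vτ j * vτ i)⁻¹) ∨
        (∃ (i j : Fin (n - 1)), (i.val + 2 ≤ j.val ∨ j.val + 2 ≤ i.val) ∧
          r = vσ i * vτ j * (vτ j * vσ i)⁻¹) ∨
        (∃ (i j : Fin (n - 1)), j.val = i.val + 1 ∧
          r = vσ i * vτ j * vτ i * (vτ j * vτ i * vσ j)⁻¹) }

/-- The virtual braid group `VB_n` as a presented group. -/
def VB (n : ℕ) := PresentedGroup (VBRels n)

instance (n : ℕ) : Group (VB n) := by unfold VB; infer_instance


/-- Entry function for a `d × d` block placed at position `i`, identity elsewhere. -/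
noncomputable def embFun (d i : ℕ) (M : Matrix (Fin d) (Fin d) ℂ) (a b : ℕ) : ℂ :=
  if ha : i ≤ a ∧ a < i + d then
    if hb : i ≤ b ∧ b < i + d then M ⟨a - i, by omega⟩ ⟨b - i, by omega⟩ else 0
  else if a = b then 1 else 0

/-- `n × n` matrix with `d × d` block `M` at position `i`, identity elsewhere. -/
noncomputable def emb (n d i : ℕ) (M : Matrix (Fin d) (Fin d) ℂ) :
    Matrix (Fin n) (Fin n) ℂ :=
  Matrix.of fun k l => embFun d i M k.val l.val

lemma embFun_in {d i a b : ℕ} (M : Matrix (Fin d) (Fin d) ℂ)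
    (ha : i ≤ a ∧ a < i + d) (hb : i ≤ b ∧ b < i + d) :
    embFun d i M a b = M ⟨a - i, by omega⟩ ⟨b - i, by omega⟩ := by
  unfold embFun; rw [dif_pos ha, dif_pos hb]

lemma embFun_right {d i a b : ℕ} (M : Matrix (Fin d) (Fin d) ℂ)
    (ha : i ≤ a ∧ a < i + d) (hb : ¬ (i ≤ b ∧ b < i + d)) :
    embFun d i M a b = 0 := by
  unfold embFun; rw [dif_pos ha, dif_neg hb]

lemma embFun_left {d i a b : ℕ} (M : Matrix (Fin d) (Fin d) ℂ)
    (ha : ¬ (i ≤ a ∧ a < i + d)) :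
    embFun d i M a b = if a = b then 1 else 0 := by
  unfold embFun; rw [dif_neg ha]

lemma embFun_out {d i a b : ℕ} (M : Matrix (Fin d) (Fin d) ℂ)
    (h : ¬ (i ≤ a ∧ a < i + d) ∨ ¬ (i ≤ b ∧ b < i + d)) :
    embFun d i M a b = if a = b then 1 else 0 := by
  by_cases ha : i ≤ a ∧ a < i + d
  · rcases h with h | h
    · exact absurd ha h
    · rw [embFun_right M ha h, if_neg (by rintro rfl; exact h ha)]
  · exact embFun_left M ha

lemma emb_one (n d i : ℕ) : emb n d i (1 : Matrix (Fin d) (Fin d) ℂ) = 1 := by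
  ext k l
  show embFun d i 1 k.val l.val = (1 : Matrix (Fin n) (Fin n) ℂ) k l
  rw [Matrix.one_apply]
  by_cases hk : i ≤ k.val ∧ k.val < i + d
  · by_cases hl : i ≤ l.val ∧ l.val < i + d
    · rw [embFun_in _ hk hl, Matrix.one_apply]
      exact if_congr (by simp only [Fin.mk.injEq, Fin.ext_iff]; omega) rfl rfl
    · rw [embFun_right _ hk hl, if_neg (by rintro rfl; exact hl hk)]
  · rw [embFun_left _ hk]
    simp [Fin.ext_iff]

lemma emb_mul {n d i : ℕ} (h : i + d ≤ n) (A B : Matrix (Fin d) (Fin d) ℂ) :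
    emb n d i A * emb n d i B = emb n d i (A * B) := by
  ext k l
  rw [Matrix.mul_apply]
  show (∑ m : Fin n, embFun d i A k.val m.val * embFun d i B m.val l.val)
      = embFun d i (A * B) k.val l.val
  rw [Fin.sum_univ_eq_sum_range (fun m => embFun d i A k.val m * embFun d i B m l.val) n]
  by_cases hk : i ≤ k.val ∧ k.val < i + d
  · have hsub : Finset.Ico i (i + d) ⊆ Finset.range n := by
      intro x hx; simp only [Finset.mem_Ico, Finset.mem_range] at *; omega
    rw [← Finset.sum_subset hsub (by
      intro x _ hx
      simp only [Finset.mem_Ico] at hx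
      rw [embFun_right A hk (by omega), zero_mul])]
    rw [Finset.sum_Ico_eq_sum_range]
    simp only [Nat.add_sub_cancel_left]
    by_cases hl : i ≤ l.val ∧ l.val < i + d
    · rw [embFun_in _ hk hl, Matrix.mul_apply,
        ← Fin.sum_univ_eq_sum_range
          (fun t => embFun d i A k.val (i + t) * embFun d i B (i + t) l.val) d]
      apply Finset.sum_congr rfl
      intro t _
      rw [embFun_in A hk (by omega), embFun_in B (by omega) hl]
      congr 1
      · congr 1
        exact Fin.ext (show i + t.val - i = t.val by omega)
      · congr 1
        exact Fin.ext (show i + t.val - i = t.val by omega)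
    · rw [embFun_right _ hk hl]
      apply Finset.sum_eq_zero
      intro t ht
      simp only [Finset.mem_range] at ht
      rw [embFun_right B (by omega) hl, mul_zero]
  · have : ∀ m ∈ Finset.range n,
        embFun d i A k.val m * embFun d i B m l.val
          = if k.val = m then embFun d i B m l.val else 0 := by
      intro m _
      rw [embFun_left A hk]
      split_ifs <;> simp
    rw [Finset.sum_congr rfl this, Finset.sum_ite_eq (Finset.range n) k.val
      (fun m => embFun d i B m l.val), if_pos (Finset.mem_range.mpr k.isLt)]
    rw [embFun_left B hk, embFun_left _ hk]

lemma emb_sub_one_row {n d i : ℕ} (M : Matrix (Fin d) (Fin d) ℂ) (m l : Fin n)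
    (hm : ¬ (i ≤ m.val ∧ m.val < i + d)) :
    (emb n d i M - 1) m l = 0 := by
  have h1 : emb n d i M m l = embFun d i M m.val l.val := rfl
  rw [Matrix.sub_apply, h1, embFun_left M hm, Matrix.one_apply]
  simp [Fin.ext_iff]

lemma emb_sub_one_col {n d i : ℕ} (M : Matrix (Fin d) (Fin d) ℂ) (k m : Fin n)
    (hm : ¬ (i ≤ m.val ∧ m.val < i + d)) :
    (emb n d i M - 1) k m = 0 := by
  by_cases hk : i ≤ k.val ∧ k.val < i + d
  · have h1 : emb n d i M k m = embFun d i M k.val m.val := rfl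
    rw [Matrix.sub_apply, h1, embFun_right M hk hm, Matrix.one_apply,
      if_neg (by rintro rfl; exact hm hk)]
    ring
  · exact emb_sub_one_row M k m hk

lemma emb_mul_comm {n d e i j : ℕ} (M : Matrix (Fin d) (Fin d) ℂ)
    (N : Matrix (Fin e) (Fin e) ℂ) (hd : i + d ≤ j ∨ j + e ≤ i) :
    emb n d i M * emb n e j N = emb n e j N * emb n d i M := by
  set A := emb n d i M with hA
  set B := emb n e j N with hB
  have h1 : (A - 1) * (B - 1) = 0 := by
    ext k l
    rw [Matrix.mul_apply, Matrix.zero_apply]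
    apply Finset.sum_eq_zero
    intro m _
    by_cases hm : i ≤ m.val ∧ m.val < i + d
    · rw [emb_sub_one_row N m l (by omega), mul_zero]
    · rw [emb_sub_one_col M k m hm, zero_mul]
  have h2 : (B - 1) * (A - 1) = 0 := by
    ext k l
    rw [Matrix.mul_apply, Matrix.zero_apply]
    apply Finset.sum_eq_zero
    intro m _
    by_cases hm : j ≤ m.val ∧ m.val < j + e
    · rw [emb_sub_one_row M m l (by omega), mul_zero]
    · rw [emb_sub_one_col N k m hm, zero_mul]
  have e1 : A * B - (A + B - 1) = 0 := by rw [← h1]; noncomm_ring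
  have e2 : B * A - (A + B - 1) = 0 := by rw [← h2]; noncomm_ring
  rw [sub_eq_zero] at e1 e2
  rw [e1, e2]

noncomputable def bmat (α : ℂ) : Matrix (Fin 2) (Fin 2) ℂ :=
  Matrix.of fun k l =>
    if k.val = 0 ∧ l.val = 0 then 1 - α else if k.val = 0 ∧ l.val = 1 then α
    else if k.val = 1 ∧ l.val = 0 then 1 else 0

noncomputable def bmatInv (α : ℂ) : Matrix (Fin 2) (Fin 2) ℂ :=
  Matrix.of fun k l =>
    if k.val = 0 ∧ l.val = 1 then 1 else if k.val = 1 ∧ l.val = 0 then α⁻¹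
    else if k.val = 1 ∧ l.val = 1 then 1 - α⁻¹ else 0

noncomputable def tmat (β : ℂ) : Matrix (Fin 2) (Fin 2) ℂ :=
  Matrix.of fun k l =>
    if k.val = 0 ∧ l.val = 1 then β⁻¹ else if k.val = 1 ∧ l.val = 0 then β else 0

lemma bmat_mul_inv {α : ℂ} (hα : α ≠ 0) : bmat α * bmatInv α = 1 := by
  ext k l
  fin_cases k <;> fin_cases l <;>
    simp [bmat, bmatInv, Matrix.mul_apply, Fin.sum_univ_two, Matrix.one_apply] <;>
    field_simp <;> ring

lemma bmat_inv_mul {α : ℂ} (hα : α ≠ 0) : bmatInv α * bmat α = 1 := by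
  ext k l
  fin_cases k <;> fin_cases l <;>
    simp [bmat, bmatInv, Matrix.mul_apply, Fin.sum_univ_two, Matrix.one_apply] <;>
    field_simp <;> ring

lemma tmat_mul_self {β : ℂ} (hβ : β ≠ 0) : tmat β * tmat β = 1 := by
  ext k l
  fin_cases k <;> fin_cases l <;>
    simp [tmat, Matrix.mul_apply, Fin.sum_univ_two, Matrix.one_apply] <;>
    field_simp

noncomputable def slo (α : ℂ) : Matrix (Fin 3) (Fin 3) ℂ :=
  Matrix.of fun k l =>
    if k.val = 0 ∧ l.val = 0 then 1 - α else if k.val = 0 ∧ l.val = 1 then α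
    else if k.val = 1 ∧ l.val = 0 then 1 else if k.val = 2 ∧ l.val = 2 then 1 else 0

noncomputable def shi (α : ℂ) : Matrix (Fin 3) (Fin 3) ℂ :=
  Matrix.of fun k l =>
    if k.val = 1 ∧ l.val = 1 then 1 - α else if k.val = 1 ∧ l.val = 2 then α
    else if k.val = 2 ∧ l.val = 1 then 1 else if k.val = 0 ∧ l.val = 0 then 1 else 0

noncomputable def tlo (β : ℂ) : Matrix (Fin 3) (Fin 3) ℂ :=
  Matrix.of fun k l =>
    if k.val = 0 ∧ l.val = 1 then β⁻¹ else if k.val = 1 ∧ l.val = 0 then β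
    else if k.val = 2 ∧ l.val = 2 then 1 else 0

noncomputable def thi (β : ℂ) : Matrix (Fin 3) (Fin 3) ℂ :=
  Matrix.of fun k l =>
    if k.val = 1 ∧ l.val = 2 then β⁻¹ else if k.val = 2 ∧ l.val = 1 then β
    else if k.val = 0 ∧ l.val = 0 then 1 else 0

lemma rel_V1 (α : ℂ) : slo α * shi α * slo α = shi α * slo α * shi α := by
  ext k l
  fin_cases k <;> fin_cases l <;>
    simp [slo, shi, Matrix.mul_apply, Fin.sum_univ_three] <;> ring

lemma rel_V4 {β : ℂ} (hβ : β ≠ 0) : tlo β * thi β * tlo β = thi β * tlo β * thi β := by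
  ext k l
  fin_cases k <;> fin_cases l <;>
    simp [tlo, thi, Matrix.mul_apply, Fin.sum_univ_three] <;>
    field_simp <;> try ring

lemma rel_V7 {α β : ℂ} (hβ : β ≠ 0) :
    slo α * thi β * tlo β = thi β * tlo β * shi α := by
  ext k l
  fin_cases k <;> fin_cases l <;>
    simp [slo, shi, tlo, thi, Matrix.mul_apply, Fin.sum_univ_three] <;>
    field_simp <;> try ring

lemma burauB_eq2 (n : ℕ) (α : ℂ) (i : ℕ) : burauB n α i = emb n 2 i (bmat α) := by
  ext k l
  show _ = embFun 2 i (bmat α) k.val l.val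
  have hv : (k = l) ↔ (k.val = l.val) := Fin.ext_iff
  unfold burauB embFun bmat
  simp only [Matrix.of_apply, hv]
  split_ifs <;> first | rfl | omega

lemma burauB_eq3lo (n : ℕ) (α : ℂ) (i : ℕ) : burauB n α i = emb n 3 i (slo α) := by
  ext k l
  show _ = embFun 3 i (slo α) k.val l.val
  have hv : (k = l) ↔ (k.val = l.val) := Fin.ext_iff
  unfold burauB embFun slo
  simp only [Matrix.of_apply, hv]
  split_ifs <;> first | rfl | omega

lemma burauB_eq3hi (n : ℕ) (α : ℂ) (i : ℕ) :
    burauB n α (i + 1) = emb n 3 i (shi α) := by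
  ext k l
  show _ = embFun 3 i (shi α) k.val l.val
  have hv : (k = l) ↔ (k.val = l.val) := Fin.ext_iff
  unfold burauB embFun shi
  simp only [Matrix.of_apply, hv]
  split_ifs <;> first | rfl | omega

lemma permT_eq2 (n : ℕ) (β : ℂ) (i : ℕ) : permT n β i = emb n 2 i (tmat β) := by
  ext k l
  show _ = embFun 2 i (tmat β) k.val l.val
  have hv : (k = l) ↔ (k.val = l.val) := Fin.ext_iff
  unfold permT embFun tmat
  simp only [Matrix.of_apply, hv]
  split_ifs <;> first | rfl | omega

lemma permT_eq3lo (n : ℕ) (β : ℂ) (i : ℕ) : permT n β i = emb n 3 i (tlo β) := by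
  ext k l
  show _ = embFun 3 i (tlo β) k.val l.val
  have hv : (k = l) ↔ (k.val = l.val) := Fin.ext_iff
  unfold permT embFun tlo
  simp only [Matrix.of_apply, hv]
  split_ifs <;> first | rfl | omega

lemma permT_eq3hi (n : ℕ) (β : ℂ) (i : ℕ) :
    permT n β (i + 1) = emb n 3 i (thi β) := by
  ext k l
  show _ = embFun 3 i (thi β) k.val l.val
  have hv : (k = l) ↔ (k.val = l.val) := Fin.ext_iff
  unfold permT embFun thi
  simp only [Matrix.of_apply, hv]
  split_ifs <;> first | rfl | omega


noncomputable def bUnit (n : ℕ) {α : ℂ} (hα : α ≠ 0) (i : ℕ) (h : i + 2 ≤ n) :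
    (Matrix (Fin n) (Fin n) ℂ)ˣ where
  val := burauB n α i
  inv := emb n 2 i (bmatInv α)
  val_inv := by rw [burauB_eq2, emb_mul h, bmat_mul_inv hα, emb_one]
  inv_val := by rw [burauB_eq2, emb_mul h, bmat_inv_mul hα, emb_one]

noncomputable def tUnit (n : ℕ) {β : ℂ} (hβ : β ≠ 0) (i : ℕ) (h : i + 2 ≤ n) :
    (Matrix (Fin n) (Fin n) ℂ)ˣ where
  val := permT n β i
  inv := permT n β i
  val_inv := by rw [permT_eq2, emb_mul h, tmat_mul_self hβ, emb_one]
  inv_val := by rw [permT_eq2, emb_mul h, tmat_mul_self hβ, emb_one]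

noncomputable def genMap (n : ℕ) (hn : 3 ≤ n) {α β : ℂ} (hα : α ≠ 0) (hβ : β ≠ 0) :
    VBGen n → (Matrix (Fin n) (Fin n) ℂ)ˣ
  | Sum.inl i => bUnit n hα i.val (by have := i.isLt; omega)
  | Sum.inr i => tUnit n hβ i.val (by have := i.isLt; omega)

set_option maxHeartbeats 1000000 in
lemma rels_check (n : ℕ) (hn : 3 ≤ n) {α β : ℂ} (hα : α ≠ 0) (hβ : β ≠ 0) :
    ∀ r ∈ VBRels n, FreeGroup.lift (genMap n hn hα hβ) r = 1 := by
  intro r hr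
  rcases hr with ⟨i,j,hij,rfl⟩|⟨i,j,hij,rfl⟩|⟨i,rfl⟩|⟨i,j,hij,rfl⟩|⟨i,j,hij,rfl⟩|⟨i,j,hij,rfl⟩|⟨i,j,hij,rfl⟩ <;>
    simp only [vσ, vτ, map_mul, map_inv, FreeGroup.lift_apply_of, genMap, mul_inv_eq_one] <;>
    apply Units.ext <;>
    simp only [Units.val_mul, bUnit, tUnit]
  · -- V1
    have h3 : i.val + 3 ≤ n := by have := j.isLt; omega
    rw [hij, burauB_eq3lo n α i.val, burauB_eq3hi n α i.val,
      emb_mul h3, emb_mul h3, emb_mul h3, emb_mul h3, rel_V1]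
  · -- V2
    rw [burauB_eq2 n α i.val, burauB_eq2 n α j.val,
      emb_mul_comm _ _ (by omega : i.val + 2 ≤ j.val ∨ j.val + 2 ≤ i.val)]
  · -- V3
    have h2 : i.val + 2 ≤ n := by have := i.isLt; omega
    rw [permT_eq2, emb_mul h2, tmat_mul_self hβ, emb_one, Units.val_one]
  · -- V4
    have h3 : i.val + 3 ≤ n := by have := j.isLt; omega
    rw [hij, permT_eq3lo n β i.val, permT_eq3hi n β i.val,
      emb_mul h3, emb_mul h3, emb_mul h3, emb_mul h3, rel_V4 hβ]
  · -- V5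
    rw [permT_eq2 n β i.val, permT_eq2 n β j.val,
      emb_mul_comm _ _ (by omega : i.val + 2 ≤ j.val ∨ j.val + 2 ≤ i.val)]
  · -- V6
    rw [burauB_eq2 n α i.val, permT_eq2 n β j.val,
      emb_mul_comm _ _ (by omega : i.val + 2 ≤ j.val ∨ j.val + 2 ≤ i.val)]
  · -- V7
    have h3 : i.val + 3 ≤ n := by have := j.isLt; omega
    rw [hij, burauB_eq3lo n α i.val, burauB_eq3hi n α i.val,
      permT_eq3lo n β i.val, permT_eq3hi n β i.val,
      emb_mul h3, emb_mul h3, emb_mul h3, emb_mul h3, rel_V7 hβ]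

/-- `σ_i ↦ B_i(α)`, `τ_i ↦ T_i(β)` defines a representation of `VB_n` in `GL(n, ℂ)`. -/
theorem virtual_braid_representation (n : ℕ) (hn : 3 ≤ n) (α β : ℂ)
    (hα : α ≠ 0) (hβ : β ≠ 0) (hαβ : α ≠ β) (hβ1 : β ≠ 1) :
    ∃ φ : VB n →* (Matrix (Fin n) (Fin n) ℂ)ˣ,
      ∀ i : Fin (n - 1),
        ((φ (PresentedGroup.of (Sum.inl i)) : (Matrix (Fin n) (Fin n) ℂ)ˣ) :
            Matrix (Fin n) (Fin n) ℂ) = burauB n α i.val ∧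
        ((φ (PresentedGroup.of (Sum.inr i)) : (Matrix (Fin n) (Fin n) ℂ)ˣ) :
            Matrix (Fin n) (Fin n) ℂ) = permT n β i.val := by
  refine ⟨PresentedGroup.toGroup (rels_check n hn hα hβ), fun i => ⟨?_, ?_⟩⟩
  · exact congrArg Units.val
      (PresentedGroup.toGroup.of (rels_check n hn hα hβ) (x := Sum.inl i))
  · exact congrArg Units.val
      (PresentedGroup.toGroup.of (rels_check n hn hα hβ) (x := Sum.inr i))
end

section
/- The mirror virtual relation T_i(β)·T_{i+1}(β)·B_i(α) = B_{i+1}(α)·T_i(β)·T_{i+1}(β) holds for all nonzero α, β ∈ ℂ and 1 ≤ i ≤ n-2. -/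
/-!
Left multiplication by `T_i(β)` or `B_i(α)` is a row operation on rows `i, i+1`, so
`P := T_i(β) T_{i+1}(β)` sends the rows `(r_i, r_{i+1}, r_{i+2})` of a matrix to
`(β⁻² r_{i+2}, β r_i, β r_{i+1})`. Comparing `P B_i(α)` with `B_{i+1}(α) P` row by row, rows
`i` and `i+2` are multiples of unit vectors on both sides, and row `i+1` is
`β((1-α) e_i + α e_{i+1})` on both sides.
-/

open Matrix

section RowOperations

variable {n i : ℕ} {a b c : Fin n}

theorem permT_apply (β : ℂ) (ha : (a : ℕ) = i) (hb : (b : ℕ) = i + 1) (k l : Fin n) :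
    permT n β i k l =
      if k = a then (if l = b then β⁻¹ else 0)
      else if k = b then (if l = a then β else 0) else (1 : Matrix (Fin n) (Fin n) ℂ) k l := by
  subst ha
  simp only [permT, of_apply, one_apply, Fin.ext_iff, hb]
  split_ifs <;> first | omega | rfl

theorem burauB_apply (α : ℂ) (ha : (a : ℕ) = i) (hb : (b : ℕ) = i + 1) (k l : Fin n) :
    burauB n α i k l =
      if k = a then (if l = a then 1 - α else 0) + (if l = b then α else 0)
      else if k = b then (if l = a then 1 else 0) else (1 : Matrix (Fin n) (Fin n) ℂ) k l := by
  subst ha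
  simp only [burauB, of_apply, one_apply, Fin.ext_iff, hb]
  split_ifs <;> first | omega | simp

theorem permT_mul_apply (β : ℂ) (ha : (a : ℕ) = i) (hb : (b : ℕ) = i + 1)
    (M : Matrix (Fin n) (Fin n) ℂ) (k l : Fin n) :
    (permT n β i * M) k l = if k = a then β⁻¹ * M b l else if k = b then β * M a l else M k l := by
  simp only [mul_apply, permT_apply β ha hb, one_apply]
  split_ifs <;> simp

theorem burauB_mul_apply (α : ℂ) (ha : (a : ℕ) = i) (hb : (b : ℕ) = i + 1)
    (M : Matrix (Fin n) (Fin n) ℂ) (k l : Fin n) :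
    (burauB n α i * M) k l =
      if k = a then (1 - α) * M a l + α * M b l else if k = b then M a l else M k l := by
  simp only [mul_apply, burauB_apply α ha hb, one_apply]
  split_ifs <;> simp [add_mul, Finset.sum_add_distrib]

theorem permT_mul_permT_succ_mul_apply (β : ℂ) (ha : (a : ℕ) = i) (hb : (b : ℕ) = i + 1)
    (hc : (c : ℕ) = i + 1 + 1) (M : Matrix (Fin n) (Fin n) ℂ) (k l : Fin n) :
    (permT n β i * permT n β (i + 1) * M) k l =
      if k = a then β⁻¹ * β⁻¹ * M c l
      else if k = b then β * M a l else if k = c then β * M b l else M k l := by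
  have hab : a ≠ b := fun e => by rw [e] at ha; omega
  have hac : a ≠ c := fun e => by rw [e] at ha; omega
  have hbc : b ≠ c := fun e => by rw [e] at hb; omega
  rw [mul_assoc, permT_mul_apply β ha hb, permT_mul_apply β hb hc, permT_mul_apply β hb hc,
    permT_mul_apply β hb hc]
  rcases eq_or_ne k a with rfl | hka
  · simp [mul_assoc]
  rcases eq_or_ne k b with rfl | hkb
  · simp [hab, hab.symm, hac]
  · simp [hka, hkb]

end RowOperations

theorem mirror_virtual_relation_general (n : ℕ) (α β : ℂ)
    (i : ℕ) (h : i + 2 < n) :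
    permT n β i * permT n β (i + 1) * burauB n α i =
      burauB n α (i + 1) * permT n β i * permT n β (i + 1) := by
  obtain ⟨a, ha⟩ : ∃ a : Fin n, (a : ℕ) = i := ⟨⟨i, by omega⟩, rfl⟩
  obtain ⟨b, hb⟩ : ∃ b : Fin n, (b : ℕ) = i + 1 := ⟨⟨i + 1, by omega⟩, rfl⟩
  obtain ⟨c, hc⟩ : ∃ c : Fin n, (c : ℕ) = i + 1 + 1 := ⟨⟨i + 2, h⟩, rfl⟩
  have hab : a ≠ b := fun e => by rw [e] at ha; omega
  have hac : a ≠ c := fun e => by rw [e] at ha; omega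
  have hbc : b ≠ c := fun e => by rw [e] at hb; omega
  conv_rhs => rw [mul_assoc, ← mul_one (permT n β i * permT n β (i + 1))]
  refine Matrix.ext fun k l => ?_
  simp only [permT_mul_permT_succ_mul_apply β ha hb hc, burauB_mul_apply α hb hc,
    burauB_apply α ha hb, one_apply]
  clear ha hb hc
  split_ifs <;> subst_vars <;> simp_all [mul_comm]

/-- The mirror virtual relation `τ_i τ_{i+1} σ_i = σ_{i+1} τ_i τ_{i+1}`. -/
theorem mirror_virtual_relation (n : ℕ) (α β : ℂ) (hα : α ≠ 0) (hβ : β ≠ 0)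
    (i : ℕ) (h : i + 2 < n) :
    permT n β i * permT n β (i + 1) * burauB n α i =
      burauB n α (i + 1) * permT n β i * permT n β (i + 1) :=
  mirror_virtual_relation_general n α β i h
end

section
/- For the matrices G_{ij} (identity except (i,i) entry t_j and (i,j) entry 1-t_i) over ℂ[t_1^{±1},…,t_n^{±1}], the relation G_{ij}·G_{kj} = G_{kj}·G_{ij} holds for pairwise distinct indices i, j, k. -/
/-- The multivariate Laurent polynomial ring `ℂ[t₁^{±1}, …, t_n^{±1}]`,
realized as the group algebra of `ℤⁿ` over `ℂ`. -/
abbrev LaurentRing (n : ℕ) := AddMonoidAlgebra ℂ (Fin n →₀ ℤ)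

/-- The variable `t_j`. -/
noncomputable def tvar {n : ℕ} (j : Fin n) : LaurentRing n :=
  AddMonoidAlgebra.single (Finsupp.single j 1) 1

/-- The extended Gassner matrix `G_{ij}`: identity except that the `(i,i)` entry
is `t_j` and the `(i,j)` entry is `1 - t_i`. -/
noncomputable def gassnerG {n : ℕ} (i j : Fin n) :
    Matrix (Fin n) (Fin n) (LaurentRing n) :=
  Matrix.of fun k l =>
    if k = i ∧ l = i then tvar j
    else if k = i ∧ l = j then 1 - tvar i
    else if k = l then 1 else 0

/-! `G_{ij} = 1 + e_i r_{ij}ᵀ` is a rank-one perturbation of the identity, whose row vector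
`r_{ij}` is supported on `{i, j}`. For distinct `i, j, k` we have `r_{ij} k = 0` and
`r_{kj} i = 0`, so both products of the two perturbations vanish and the matrices commute. -/

namespace Matrix

variable {m α : Type*} [Fintype m] [DecidableEq m] [Semiring α]

theorem commute_one_add_vecMulVec {u v u' v' : m → α} (h : v ⬝ᵥ u' = 0) (h' : v' ⬝ᵥ u = 0) :
    Commute (1 + vecMulVec u v) (1 + vecMulVec u' v') := by
  have hzero : vecMulVec u v * vecMulVec u' v' = 0 := by
    rw [vecMulVec_mul_vecMulVec, h, zero_smul, vecMulVec_zero]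
  have hzero' : vecMulVec u' v' * vecMulVec u v = 0 := by
    rw [vecMulVec_mul_vecMulVec, h', zero_smul, vecMulVec_zero]
  have hcomm : Commute (vecMulVec u v) (vecMulVec u' v') := hzero.trans hzero'.symm
  exact (Commute.one_left _).add_left ((Commute.one_right _).add_right hcomm)

end Matrix

open Matrix

noncomputable def gassnerRow {n : ℕ} (i j : Fin n) : Fin n → LaurentRing n :=
  Pi.single i (tvar j - 1) + Pi.single j (1 - tvar i)

theorem gassnerRow_apply_of_ne {n : ℕ} {i j k : Fin n} (hki : k ≠ i) (hkj : k ≠ j) :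
    gassnerRow i j k = 0 := by
  simp [gassnerRow, hki, hkj]

theorem gassnerG_eq_one_add_vecMulVec {n : ℕ} {i j : Fin n} (hij : i ≠ j) :
    gassnerG i j = 1 + vecMulVec (Pi.single i 1) (gassnerRow i j) := by
  ext a b
  by_cases ha : a = i <;> by_cases hb : b = i <;> by_cases hb' : b = j <;>
    simp_all [gassnerG, gassnerRow, vecMulVec_apply, one_apply, eq_comm]

/-- Second McCool relation: `G_{ij}` and `G_{kj}` commute for distinct `i, j, k`. -/
theorem mccool_relation_two (n : ℕ) (i j k : Fin n)
    (hij : i ≠ j) (hik : i ≠ k) (hjk : j ≠ k) :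
    gassnerG i j * gassnerG k j = gassnerG k j * gassnerG i j := by
  rw [gassnerG_eq_one_add_vecMulVec hij, gassnerG_eq_one_add_vecMulVec hjk.symm]
  refine commute_one_add_vecMulVec ?_ ?_
  · rw [dotProduct_single_one, gassnerRow_apply_of_ne hik.symm hjk.symm]
  · rw [dotProduct_single_one, gassnerRow_apply_of_ne hik hij]
end

section
/- For the matrices G_{ij} (identity except (i,i) entry t_j and (i,j) entry 1-t_i) over ℂ[t_1^{±1},…,t_n^{±1}], the relation (G_{ij}·G_{kj})·G_{ik} = G_{ik}·(G_{ij}·G_{kj}) holds for pairwise distinct indices i, j, k. -/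
/-!
Write `G_{ij} = 1 + (t_j - 1) E_{ii} + (1 - t_i) E_{ij}` with matrix units `E`. Because
`i, j, k` are distinct, `P = G_{ij} G_{kj}` is `1` plus the four terms of its two factors, and
for `G_{ik} = 1 + e E_{ii} + f E_{ik}` one finds `G_{ik} P - P G_{ik} = (e b + f d) E_{ij}`,
where `b = 1 - t_i` and `d = 1 - t_k` are the off-diagonal entries of `P`. With `e = t_k - 1`
and `f = 1 - t_i` this coefficient is `(t_k - 1)(1 - t_i) + (1 - t_i)(1 - t_k) = 0`.
-/

namespace Matrix

variable {n R : Type*} [DecidableEq n]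

def rowOp [Semiring R] (i j : n) (a b : R) : Matrix n n R :=
  1 + single i i a + single i j b

theorem rowOp_mul_rowOp [Fintype n] [Semiring R] {i j k : n} (hik : i ≠ k) (hjk : j ≠ k)
    (a b c d : R) :
    rowOp i j a b * rowOp k j c d =
      1 + single i i a + single i j b + single k k c + single k j d := by
  simp only [rowOp, add_mul, mul_add, one_mul, mul_one, single_mul_single_of_ne, hik, hjk,
    ne_eq, not_false_eq_true, add_zero]

theorem commute_rowOp_mul_rowOp_rowOp [Fintype n] [CommRing R] {i j k : n} (hij : i ≠ j)
    (hik : i ≠ k) (hjk : j ≠ k) {a b d e f : R} (h : e * b + f * d = 0) :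
    Commute (rowOp i j a b * rowOp k j a d) (rowOp i k e f) := by
  have hcommutator : single i j (e * b) + single i j (f * d) = 0 := by
    rw [← single_add, h, single_zero]
  rw [rowOp_mul_rowOp hik hjk]
  simp only [rowOp, Commute, SemiconjBy, add_mul, mul_add, one_mul, mul_one,
    single_mul_single_same, single_mul_single_of_ne, hik, hij.symm, hik.symm, ne_eq,
    not_false_eq_true, add_zero]
  rw [mul_comm e a, mul_comm f a, eq_comm, ← sub_eq_zero, ← hcommutator]
  abel

end Matrix

open Matrix

theorem gassnerG_eq_rowOp {n : ℕ} {i j : Fin n} (hij : i ≠ j) :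
    gassnerG i j = rowOp i j (tvar j - 1) (1 - tvar i) := by
  ext a b : 1
  simp only [gassnerG, rowOp, of_apply, Matrix.add_apply, one_apply, single_apply]
  split_ifs <;> grind

/-- Third McCool relation: `G_{ij}·G_{kj}` commutes with `G_{ik}` for distinct `i, j, k`. -/
theorem mccool_relation_three (n : ℕ) (i j k : Fin n)
    (hij : i ≠ j) (hik : i ≠ k) (hjk : j ≠ k) :
    (gassnerG i j * gassnerG k j) * gassnerG i k =
      gassnerG i k * (gassnerG i j * gassnerG k j) := by
  rw [gassnerG_eq_rowOp hij, gassnerG_eq_rowOp hjk.symm, gassnerG_eq_rowOp hik]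
  exact commute_rowOp_mul_rowOp_rowOp hij hik hjk (by ring)
end

section
/- The assignment ξ_{ij} ↦ G_{ij} (identity matrix except (i,i) entry t_j, (i,j) entry 1-t_i) extends to a group homomorphism from the pure welded braid group (McCool group) PW_n — presented by generators ξ_{ij}, 1 ≤ i ≠ j ≤ n, subject to the McCool relations — into GL(n, ℂ[t_1^{±1},…,t_n^{±1}]). -/
/-- Generators `ξ_{ij}` (`i ≠ j`) of the McCool group `PW_n`. -/
abbrev McCoolGen (n : ℕ) := { p : Fin n × Fin n // p.1 ≠ p.2 }

/-- `ξ_{ij}` as a free group element. -/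
def ξ {n : ℕ} (i j : Fin n) (h : i ≠ j) : FreeGroup (McCoolGen n) :=
  FreeGroup.of ⟨(i, j), h⟩

/-- The McCool relations as relator words. -/
def McCoolRels (n : ℕ) : Set (FreeGroup (McCoolGen n)) :=
  { r | (∃ (k j s t : Fin n) (hkj : k ≠ j) (hst : s ≠ t),
          k ≠ s ∧ k ≠ t ∧ j ≠ s ∧ j ≠ t ∧
          r = (ξ k j hkj)⁻¹ * (ξ s t hst)⁻¹ * ξ k j hkj * ξ s t hst) ∨
        (∃ (i j k : Fin n) (hij : i ≠ j) (hkj : k ≠ j), i ≠ k ∧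
          r = (ξ i j hij)⁻¹ * (ξ k j hkj)⁻¹ * ξ i j hij * ξ k j hkj) ∨
        (∃ (i j k : Fin n) (hij : i ≠ j) (hkj : k ≠ j) (hik : i ≠ k),
          r = (ξ i j hij * ξ k j hkj)⁻¹ * (ξ i k hik)⁻¹ *
              (ξ i j hij * ξ k j hkj) * ξ i k hik) }

/-- The McCool group (pure welded braid group) `PW_n` as a presented group. -/
def McCoolGroup (n : ℕ) := PresentedGroup (McCoolRels n)

instance (n : ℕ) : Group (McCoolGroup n) := by unfold McCoolGroup; infer_instance

/-!
Each `G_{ij}` differs from the identity only in row `i`: it is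
`1 + (t_j - 1) E_{ii} + (1 - t_i) E_{ij}`. Such a matrix is invertible as soon as its diagonal
entry `t_j` is, and two such matrices commute when neither row index is a column index of the
other; this gives the first two families of relations. For the third, `G_{ij} G_{kj}` and `G_{ik}`
commute up to the `(i,j)` entry `(t_k - 1)(1 - t_i) + (1 - t_i)(1 - t_k)`, which vanishes.
-/

open Matrix

section RowMatrix

variable {m R : Type*} [Fintype m] [DecidableEq m] [CommRing R]

def rowMatrix (i j : m) (a b : R) : Matrix m m R :=
  1 + single i i a + single i j b

theorem rowMatrix_mul_rowMatrix {i j : m} (hij : i ≠ j) (a b c d : R) :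
    rowMatrix i j a b * rowMatrix i j c d = rowMatrix i j (a + c + a * c) (b + d + a * d) := by
  simp only [rowMatrix, mul_add, mul_one, add_mul, one_mul, single_mul_single_same, ne_eq,
    hij.symm, not_false_eq_true, single_mul_single_of_ne, add_zero, single_add]
  abel

theorem isUnit_rowMatrix {i j : m} (hij : i ≠ j) {a : R} (ha : IsUnit (1 + a)) (b : R) :
    IsUnit (rowMatrix i j a b) := by
  obtain ⟨v, hv⟩ := ha.exists_right_inv
  have hinv : rowMatrix i j a b * rowMatrix i j (v - 1) (-(v * b)) = 1 := by
    rw [rowMatrix_mul_rowMatrix hij, show a + (v - 1) + a * (v - 1) = 0 by linear_combination hv,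
      show b + -(v * b) + a * -(v * b) = 0 by linear_combination -b * hv]
    simp [rowMatrix]
  exact (isUnit_iff_isUnit_det _).mpr (isUnit_det_of_right_inverse hinv)

theorem commute_rowMatrix {k j s t : m} (hks : k ≠ s) (hkt : k ≠ t) (hjs : j ≠ s)
    (a b c d : R) : Commute (rowMatrix k j a b) (rowMatrix s t c d) := by
  simp only [rowMatrix, commute_iff_eq, mul_add, mul_one, add_mul, one_mul, ne_eq, hks, hjs,
    hks.symm, hkt.symm, not_false_eq_true, single_mul_single_of_ne, add_zero]
  abel

theorem commute_rowMatrix_mul_rowMatrix {i j k : m} (hij : i ≠ j) (hkj : k ≠ j) (hik : i ≠ k)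
    (a b d e f : R) (h : e * b + f * d = 0) :
    Commute (rowMatrix i j a b * rowMatrix k j a d) (rowMatrix i k e f) := by
  simp only [rowMatrix, commute_iff_eq, mul_add, mul_one, add_mul, one_mul, ne_eq, hik, hij.symm,
    hkj.symm, hik.symm, not_false_eq_true, single_mul_single_same, single_mul_single_of_ne,
    add_zero]
  have hij_entry : single i j (e * b) + single i j (f * d) = 0 := by
    rw [← single_add, h, single_zero]
  rw [mul_comm e a, mul_comm f a, eq_comm, ← sub_eq_zero, ← hij_entry]
  abel

end RowMatrix

theorem Commute.inv_mul_inv_mul_mul_eq_one {G : Type*} [Group G] {a b : G} (h : Commute a b) :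
    a⁻¹ * b⁻¹ * a * b = 1 := by
  simpa [commutatorElement_def] using commutatorElement_eq_one_iff_commute.mpr h.inv_inv

section Gassner

variable {n : ℕ}

theorem isUnit_tvar (j : Fin n) : IsUnit (tvar j) :=
  .of_mul_eq_one (AddMonoidAlgebra.single (-Finsupp.single j 1) 1) <| by
    simp [tvar, AddMonoidAlgebra.single_mul_single, AddMonoidAlgebra.one_def]

theorem gassnerG_eq_rowMatrix {i j : Fin n} (hij : i ≠ j) :
    gassnerG i j = rowMatrix i j (tvar j - 1) (1 - tvar i) := by
  ext k l : 1
  simp only [gassnerG, rowMatrix, of_apply, Matrix.add_apply, one_apply, single]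
  by_cases hk : k = i <;> by_cases hl : l = i <;> by_cases hlj : l = j <;>
    simp_all [@eq_comm (Fin n)]

theorem isUnit_gassnerG {i j : Fin n} (hij : i ≠ j) : IsUnit (gassnerG i j) := by
  rw [gassnerG_eq_rowMatrix hij]
  exact isUnit_rowMatrix hij (by simpa using isUnit_tvar j) _

noncomputable def gassnerUnit (p : McCoolGen n) : (Matrix (Fin n) (Fin n) (LaurentRing n))ˣ :=
  (isUnit_gassnerG p.2).unit

@[simp]
theorem val_gassnerUnit (p : McCoolGen n) :
    (gassnerUnit p : Matrix _ _ _) = gassnerG p.1.1 p.1.2 :=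
  IsUnit.unit_spec _

theorem commute_gassnerG {k j s t : Fin n} (hkj : k ≠ j) (hst : s ≠ t) (hks : k ≠ s) (hkt : k ≠ t)
    (hjs : j ≠ s) : Commute (gassnerG k j) (gassnerG s t) := by
  rw [gassnerG_eq_rowMatrix hkj, gassnerG_eq_rowMatrix hst]
  exact commute_rowMatrix hks hkt hjs _ _ _ _

theorem commute_gassnerG_mul_gassnerG {i j k : Fin n} (hij : i ≠ j) (hkj : k ≠ j) (hik : i ≠ k) :
    Commute (gassnerG i j * gassnerG k j) (gassnerG i k) := by
  rw [gassnerG_eq_rowMatrix hij, gassnerG_eq_rowMatrix hkj, gassnerG_eq_rowMatrix hik]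
  exact commute_rowMatrix_mul_rowMatrix hij hkj hik _ _ _ _ _ (by ring)

theorem lift_gassnerUnit_eq_one {r : FreeGroup (McCoolGen n)} (hr : r ∈ McCoolRels n) :
    FreeGroup.lift gassnerUnit r = 1 := by
  rcases hr with ⟨k, j, s, t, hkj, hst, hks, hkt, hjs, -, rfl⟩ | ⟨i, j, k, hij, hkj, hik, rfl⟩ |
      ⟨i, j, k, hij, hkj, hik, rfl⟩ <;>
    simp only [map_mul, map_inv, ξ, FreeGroup.lift_apply_of] <;>
    refine Commute.inv_mul_inv_mul_mul_eq_one (Commute.units_val_iff.mp ?_)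
  · simpa using commute_gassnerG hkj hst hks hkt hjs
  · simpa using commute_gassnerG hij hkj hik hij hkj.symm
  · simpa using commute_gassnerG_mul_gassnerG hij hkj hik

noncomputable def gassnerRep (n : ℕ) :
    McCoolGroup n →* (Matrix (Fin n) (Fin n) (LaurentRing n))ˣ :=
  PresentedGroup.toGroup fun _ => lift_gassnerUnit_eq_one

theorem gassnerRep_of (p : McCoolGen n) : gassnerRep n (PresentedGroup.of p) = gassnerUnit p :=
  PresentedGroup.toGroup.of _

end Gassner

/-- `ξ_{ij} ↦ G_{ij}` extends to a homomorphism
`PW_n → GL(n, ℂ[t₁^{±1},…,t_n^{±1}])`. -/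
theorem mccool_gassner_representation (n : ℕ) :
    ∃ φ : McCoolGroup n →* (Matrix (Fin n) (Fin n) (LaurentRing n))ˣ,
      ∀ p : McCoolGen n,
        ((φ (PresentedGroup.of p) : (Matrix (Fin n) (Fin n) (LaurentRing n))ˣ) :
            Matrix (Fin n) (Fin n) (LaurentRing n)) = gassnerG p.val.1 p.val.2 :=
  ⟨gassnerRep n, fun p => by rw [gassnerRep_of, val_gassnerUnit]⟩
end

section
/- The automorphisms ρ_i, ϑ_i of the free group F_n (n ≥ 3) do NOT satisfy the relation ϑ_{i+1}ρ_iρ_{i+1} = ϑ_iρ_{i+1}ρ_i: for n = 3 and i = 1, the compositions ϑ_2∘ρ_1∘ρ_2 and ϑ_1∘ρ_2∘ρ_1 differ on a generator of F_3. -/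
/-- The Artin endomorphism `ρ_i` of the free group `F_n`:
`x_i ↦ x_i x_{i+1} x_i⁻¹`, `x_{i+1} ↦ x_i`, fixing other generators. -/
def artinRho (n i : ℕ) (h : i + 1 < n) : FreeGroup (Fin n) →* FreeGroup (Fin n) :=
  FreeGroup.lift fun j =>
    if j.val = i then
      FreeGroup.of ⟨i, Nat.lt_of_succ_lt h⟩ * FreeGroup.of ⟨i + 1, h⟩ *
        (FreeGroup.of ⟨i, Nat.lt_of_succ_lt h⟩)⁻¹
    else if j.val = i + 1 then FreeGroup.of ⟨i, Nat.lt_of_succ_lt h⟩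
    else FreeGroup.of j

/-- The permutation endomorphism `ϑ_i` of `F_n`: swaps `x_i` and `x_{i+1}`. -/
def permTheta (n i : ℕ) (h : i + 1 < n) : FreeGroup (Fin n) →* FreeGroup (Fin n) :=
  FreeGroup.lift fun j =>
    if j.val = i then FreeGroup.of ⟨i + 1, h⟩
    else if j.val = i + 1 then FreeGroup.of ⟨i, Nat.lt_of_succ_lt h⟩
    else FreeGroup.of j

open FreeGroup

/- On `x₁` (0-indexed `of 0`) both sides are conjugates of `x₃`, the second one by an extra
`x₂`; so the relation would force `x₂` to commute with `x₁ x₃ x₁⁻¹`, which fails in the free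
group. -/

theorem permTheta_one_comp_artinRho_zero_comp_artinRho_one_of_zero :
    (permTheta 3 1 (by norm_num)).comp
        ((artinRho 3 0 (by norm_num)).comp (artinRho 3 1 (by norm_num))) (of 0) =
      of 0 * of 2 * (of 0)⁻¹ := by
  simp [artinRho, permTheta]

theorem permTheta_zero_comp_artinRho_one_comp_artinRho_zero_of_zero :
    (permTheta 3 0 (by norm_num)).comp
        ((artinRho 3 1 (by norm_num)).comp (artinRho 3 0 (by norm_num))) (of 0) =
      of 1 * (of 0 * of 2 * (of 0)⁻¹) * (of 1)⁻¹ := by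
  simp [artinRho, permTheta, mul_assoc]

theorem not_commute_of_one_conj_of_two :
    ¬Commute (of (1 : Fin 3)) (of 0 * of 2 * (of 0)⁻¹) := by
  rw [Commute, SemiconjBy]
  decide

/-- In `F_3` the second 'forbidden relation' fails: `ϑ_2 ρ_1 ρ_2 ≠ ϑ_1 ρ_2 ρ_1`
(1-indexed; here 0-indexed). The two compositions differ on some generator. -/
theorem forbidden_relation_fails_aut :
    ∃ k : Fin 3,
      (permTheta 3 1 (by omega)).comp
          ((artinRho 3 0 (by omega)).comp (artinRho 3 1 (by omega)))
          (FreeGroup.of k) ≠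
        (permTheta 3 0 (by omega)).comp
          ((artinRho 3 1 (by omega)).comp (artinRho 3 0 (by omega)))
          (FreeGroup.of k) := by
  refine ⟨0, fun h => not_commute_of_one_conj_of_two ?_⟩
  rw [permTheta_one_comp_artinRho_zero_comp_artinRho_one_of_zero,
    permTheta_zero_comp_artinRho_one_comp_artinRho_zero_of_zero] at h
  exact (eq_mul_inv_iff_mul_eq.mp h).symm
end
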